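/- Let H be a Hopf algebra over a field k with bijective antipode S, let λ : H → k be a nonzero left integral for H in H⁎, and set Λ := λ ∘ S⁻¹ (a right integral for H in H⁎). Assume the maps h ↦ λ ↼ h and h ↦ h ⇀ Λ from H to H⁎ are injective. Let χ : H → H satisfy λ(x·h) = λ(χ(h)·x) for all x, h ∈ H, and let Ω : H → H satisfy Λ(h·x) = Λ(x·Ω(h)) for all x, h ∈ H (i.e. Ω(h) ⇀ Λ = Λ ↼ h). Then Ω = S⁻¹ ∘ χ ∘ S = S ∘ χ ∘ S⁻¹, and ε ∘ Ω = (ε ∘ χ) ∘ S. -/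

import Mathlib

/-!
Helper definitions for Sweedler-notation expressions in a Hopf algebra `H` over a field `k`.
-/

open TensorProduct

variable {k H : Type*} [Field k] [Ring H] [HopfAlgebra k H]

/-- `swl f h = f(h₁) • h₂` in Sweedler notation. -/
noncomputable def swl (f : H →ₗ[k] k) : H →ₗ[k] H :=
  (TensorProduct.lid k H).toLinearMap ∘ₗ (f.rTensor H) ∘ₗ Coalgebra.comul

/-- `swr f h = f(h₂) • h₁` in Sweedler notation. -/
noncomputable def swr (f : H →ₗ[k] k) : H →ₗ[k] H :=
  (TensorProduct.rid k H).toLinearMap ∘ₗ (f.lTensor H) ∘ₗ Coalgebra.comul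

/-- `sw2 f g h = f(h₁) * g(h₂)`, an element of `H`, in Sweedler notation. -/
noncomputable def sw2 (f g : H →ₗ[k] H) : H →ₗ[k] H :=
  (LinearMap.mul' k H) ∘ₗ (TensorProduct.map f g) ∘ₗ Coalgebra.comul

/-- `sw2k f g h = f(h₁) * g(h₂)`, a scalar, in Sweedler notation. -/
noncomputable def sw2k (f g : H →ₗ[k] k) : H →ₗ[k] k :=
  (LinearMap.mul' k k) ∘ₗ (TensorProduct.map f g) ∘ₗ Coalgebra.comul

/-- `comul3 h = (h₁ ⊗ h₂) ⊗ h₃`, the iterated comultiplication `(Δ ⊗ id)Δ`. -/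
noncomputable def comul3 : H →ₗ[k] (H ⊗[k] H) ⊗[k] H :=
  (LinearMap.rTensor H Coalgebra.comul) ∘ₗ Coalgebra.comul

/-- `sw3 f g e h = f(h₁) * g(h₂) * e(h₃)`, an element of `H`, in Sweedler notation. -/
noncomputable def sw3 (f g e : H →ₗ[k] H) : H →ₗ[k] H :=
  (LinearMap.mul' k H) ∘ₗ
    (TensorProduct.map ((LinearMap.mul' k H) ∘ₗ TensorProduct.map f g) e) ∘ₗ comul3

/-!
The Nakayama automorphism `χ` is an algebra map, and the functionals `λ(· x)` separate the points
of `H`. Testing `Δ(χ w)` against them, with the integral identity `∑ λ(a₂ x) S(a₁) = ∑ λ(a x₂) x₁`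
used twice, gives Radford's formula `S²(χ w) = ∑ α(w₂) w₁` for the character `α = ε ∘ χ`.
Since `S` is an anti-coalgebra map and every character satisfies `α ∘ S² = α`, the right-hand side
commutes with `S²`, hence so does `χ`. Transporting the defining identity of `Ω` along
`Λ = λ ∘ S⁻¹` gives `Ω = S ∘ χ ∘ S⁻¹`, which then equals `S⁻¹ ∘ χ ∘ S`; and `ε ∘ S = ε` together
with `α ∘ S² = α` gives `ε ∘ Ω = ε ∘ χ ∘ S`.
-/

open Coalgebra HopfAlgebra WithConv

theorem TensorProduct.eq_of_forall_rid_lTensor_eq {R M N ι : Type*} [CommSemiring R]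
    [AddCommMonoid M] [Module R M] [Module.Free R M] [AddCommMonoid N] [Module R N]
    (F : ι → N →ₗ[R] R) (hF : Function.Injective fun n i ↦ F i n) {u v : M ⊗[R] N}
    (h : ∀ i, TensorProduct.rid R M (LinearMap.lTensor M (F i) u) =
      TensorProduct.rid R M (LinearMap.lTensor M (F i) v)) :
    u = v := by
  classical
  let b := Module.Free.chooseBasis R M
  have coeff : ∀ i j w, F i (equivFinsuppOfBasisLeft b w j) =
      b.repr (TensorProduct.rid R M (LinearMap.lTensor M (F i) w)) j := by
    intro i j w
    induction w using TensorProduct.induction_on <;> simp_all [mul_comm]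
  refine (equivFinsuppOfBasisLeft b).injective (Finsupp.ext fun j ↦ hF (funext fun i ↦ ?_))
  simp only [coeff, h]

namespace HopfAlgebra

variable {R A B : Type*} [CommSemiring R] [Semiring A] [HopfAlgebra R A]

section Algebra

variable [Semiring B] [Algebra R B]

lemma toConv_mul_toConv_comp_antipode (f : A →ₐ[R] B) :
    toConv f.toLinearMap * toConv (f.toLinearMap ∘ₗ antipode R) = 1 := by
  ext a
  simp [(ℛ R a).convMul_apply, ← map_mul, ← map_sum, sum_mul_antipode_eq_algebraMap_counit]

lemma toConv_comp_antipode_mul_toConv (f : A →ₐ[R] B) :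
    toConv (f.toLinearMap ∘ₗ antipode R) * toConv f.toLinearMap = 1 := by
  ext a
  simp [(ℛ R a).convMul_apply, ← map_mul, ← map_sum, sum_antipode_mul_eq_algebraMap_counit]

end Algebra

open TensorProduct in
/-- `Δ = incL * incR` in the convolution algebra `Hom(A, A ⊗ A)`, so `(S ⊗ S) ∘ τ ∘ Δ`, which is
`(incR ∘ S) * (incL ∘ S)`, is a right inverse of `Δ`; and `Δ ∘ S` is a left inverse. -/
theorem comul_comp_antipode :
    comul ∘ₗ antipode R =
      map (antipode R) (antipode R) ∘ₗ (TensorProduct.comm R A A).toLinearMap ∘ₗ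
        comul (R := R) (A := A) := by
  let incL : A →ₐ[R] A ⊗[R] A := Algebra.TensorProduct.includeLeft
  let incR : A →ₐ[R] A ⊗[R] A := Algebra.TensorProduct.includeRight
  have comul_eq : toConv (comul (R := R) (A := A)) =
      toConv incL.toLinearMap * toConv incR.toLinearMap := by
    ext a
    simp [incL, incR, (ℛ R a).convMul_apply, ← (ℛ R a).eq]
  have flip_eq : toConv (map (antipode R) (antipode R) ∘ₗ
      (TensorProduct.comm R A A).toLinearMap ∘ₗ comul (R := R) (A := A)) =
      toConv (incR.toLinearMap ∘ₗ antipode R) * toConv (incL.toLinearMap ∘ₗ antipode R) := by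
    ext a
    simp [incL, incR, (ℛ R a).convMul_apply, ← (ℛ R a).eq]
  refine toConv_injective (left_inv_eq_right_inv (a := toConv comul)
    (toConv_comp_antipode_mul_toConv (Bialgebra.comulAlgHom R A)) ?_)
  rw [flip_eq, comul_eq, mul_assoc, ← mul_assoc (toConv incR.toLinearMap),
    toConv_mul_toConv_comp_antipode, one_mul, toConv_mul_toConv_comp_antipode]

theorem comul_antipode (a : A) :
    comul (R := R) (antipode R a) =
      TensorProduct.map (antipode R) (antipode R) (TensorProduct.comm R A A (comul a)) :=
  LinearMap.congr_fun comul_comp_antipode a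

/-- `f ∘ S` is again an algebra map because `B` is commutative; `f ∘ S²` and `f` are both
convolution inverses of it. -/
theorem algHom_antipode_antipode [CommSemiring B] [Algebra R B] (f : A →ₐ[R] B) (a : A) :
    f (antipode R (antipode R a)) = f a := by
  let g : A →ₐ[R] B := .ofLinearMap (f.toLinearMap ∘ₗ antipode R) (by simp)
    fun x y ↦ by simp [antipode_mul_antidistrib, mul_comm]
  have h := left_inv_eq_right_inv (toConv_comp_antipode_mul_toConv g)
    (toConv_comp_antipode_mul_toConv f)
  exact congr($h a)

end HopfAlgebra

lemma swr_eq_sum {a : H} {ι : Type*} (r : Repr k a ι) (f : H →ₗ[k] k) :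
    swr f a = ∑ i ∈ r.index, f (r.right i) • r.left i := by
  simp [swr, ← r.eq]

lemma swr_antipode_antipode (f : H →ₐ[k] k) (a : H) :
    swr f.toLinearMap (antipode k (antipode k a)) =
      antipode k (antipode k (swr f.toLinearMap a)) := by
  simp [swr, comul_antipode, ← (ℛ k a).eq, algHom_antipode_antipode]

open LinearMap in
lemma antipode_swr_comp_mulRight {lam : H →ₗ[k] k} (hlam : ∀ h : H, swr lam h = lam h • (1 : H))
    (a x : H) :
    antipode k (swr (lam ∘ₗ mulRight k x) a) = swr (lam ∘ₗ mulLeft k a) x := by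
  let r := ℛ k a
  let c i := ℛ k (r.left i)
  let d i := ℛ k (r.right i)
  let m := ℛ k x
  let Φ : H ⊗[k] (H ⊗[k] H) →ₗ[k] H := ∑ l ∈ m.index, mul' k H ∘ₗ
    TensorProduct.map (antipode k) ((TensorProduct.rid k H).toLinearMap ∘ₗ
      TensorProduct.map (mulRight k (m.left l)) (lam ∘ₗ mulRight k (m.right l)))
  have coassoc := congr(Φ $(Coalgebra.sum_tmul_tmul_eq r c d))
  simp only [map_sum, Φ, LinearMap.sum_apply, LinearMap.comp_apply, TensorProduct.map_tmul,
    LinearEquiv.coe_coe, TensorProduct.rid_tmul, mul'_apply, mulRight_apply] at coassoc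
  calc antipode k (swr (lam ∘ₗ mulRight k x) a)
      = ∑ i ∈ r.index, antipode k (r.left i) * swr lam (r.right i * x) := by
        simp [swr_eq_sum r, hlam]
    _ = ∑ i ∈ r.index, ∑ j ∈ (d i).index, ∑ l ∈ m.index,
          antipode k (r.left i) *
            (lam ((d i).right j * m.right l) • ((d i).left j * m.left l)) := by
        simp [swr_eq_sum ((d _).mul m), Finset.mul_sum, Finset.sum_product]
    _ = ∑ i ∈ r.index, ∑ j ∈ (c i).index, ∑ l ∈ m.index,
          antipode k ((c i).left j) * (lam (r.right i * m.right l) • ((c i).right j * m.left l)) :=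
        coassoc.symm
    _ = ∑ i ∈ r.index, ∑ l ∈ m.index,
          counit (R := k) (r.left i) • lam (r.right i * m.right l) • m.left l := by
        refine Finset.sum_congr rfl fun i _ ↦ ?_
        rw [Finset.sum_comm]
        refine Finset.sum_congr rfl fun l _ ↦ ?_
        simp_rw [mul_smul_comm, ← mul_assoc, ← Finset.smul_sum, ← Finset.sum_mul,
          sum_antipode_mul_eq_smul (c i), smul_mul_assoc, one_mul]
        exact smul_comm _ _ _
    _ = swr (lam ∘ₗ mulLeft k a) x := by
        rw [swr_eq_sum m, Finset.sum_comm]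
        refine Finset.sum_congr rfl fun l _ ↦ ?_
        simp_rw [smul_smul, ← Finset.sum_smul]
        conv_rhs => rw [← Coalgebra.sum_counit_smul r]
        simp [Finset.sum_mul, mul_comm]

section Nakayama

variable {lam : H →ₗ[k] k} {χ : H → H}
  (hinj : Function.Injective fun h : H ↦ lam ∘ₗ LinearMap.mulLeft k h)
  (hχ : ∀ x h : H, lam (x * h) = lam (χ h * x))

noncomputable def nakayamaAlgHom : H →ₐ[k] H :=
  .ofLinearMap
    { toFun := χ
      map_add' u v := hinj <| LinearMap.ext fun x ↦ by simp [add_mul, ← hχ, mul_add]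
      map_smul' c u := hinj <| LinearMap.ext fun x ↦ by simp [← hχ] }
    (hinj <| LinearMap.ext fun x ↦ by simp [← hχ])
    fun u v ↦ hinj <| LinearMap.ext fun x ↦ by simp [mul_assoc, ← hχ]

@[simp] lemma nakayamaAlgHom_apply (h : H) : nakayamaAlgHom hinj hχ h = χ h := rfl

open LinearMap in
theorem comul_nakayama (hlam : ∀ h : H, swr lam h = lam h • (1 : H)) (w : H) :
    TensorProduct.map (antipode k ∘ₗ antipode k) id (comul (χ w)) =
      lTensor H (nakayamaAlgHom hinj hχ).toLinearMap (comul w) := by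
  refine TensorProduct.eq_of_forall_rid_lTensor_eq (fun x ↦ lam ∘ₗ mulRight k x)
    (fun u v huv ↦ hinj (LinearMap.ext fun x ↦ congr_fun huv x)) fun x ↦ ?_
  calc _ = antipode k (antipode k (swr (lam ∘ₗ mulRight k x) (χ w))) := by
        simp [swr, ← (ℛ k (χ w)).eq]
    _ = antipode k (swr (lam ∘ₗ mulRight k w) x) := by
        rw [antipode_swr_comp_mulRight hlam,
          show lam ∘ₗ mulLeft k (χ w) = lam ∘ₗ mulRight k w from ext fun y ↦ (hχ y w).symm]
    _ = _ := by
        rw [antipode_swr_comp_mulRight hlam]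
        simp [swr, ← (ℛ k w).eq, ← hχ]

open LinearMap in
theorem antipode_antipode_nakayama (hlam : ∀ h : H, swr lam h = lam h • (1 : H)) (w : H) :
    antipode k (antipode k (χ w)) =
      swr ((Bialgebra.counitAlgHom k H).comp (nakayamaAlgHom hinj hχ)).toLinearMap w := by
  have hε : ∀ u : H ⊗[k] H, TensorProduct.rid k H (lTensor H counit
      (TensorProduct.map (antipode k ∘ₗ antipode k) id u)) =
      antipode k (antipode k (TensorProduct.rid k H (lTensor H counit u))) := fun u ↦ by
    induction u using TensorProduct.induction_on <;> simp_all
  have h := congr(TensorProduct.rid k H (lTensor H counit $(comul_nakayama hinj hχ hlam w)))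
  rwa [hε, Coalgebra.lTensor_counit_comul, TensorProduct.rid_tmul, one_smul,
    ← LinearMap.comp_apply (lTensor H counit), ← lTensor_comp] at h

theorem nakayama_antipode_antipode (hlam : ∀ h : H, swr lam h = lam h • (1 : H))
    (hS : Function.Injective (antipode k (A := H))) (h : H) :
    nakayamaAlgHom hinj hχ (antipode k (antipode k h)) =
      antipode k (antipode k (nakayamaAlgHom hinj hχ h)) := by
  apply hS; apply hS
  rw [nakayamaAlgHom_apply, nakayamaAlgHom_apply, antipode_antipode_nakayama hinj hχ hlam,
    swr_antipode_antipode, ← antipode_antipode_nakayama hinj hχ hlam]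

end Nakayama

theorem statement9_general
    (S' : H →ₗ[k] H)
    (hS'l : ∀ x : H, S' (HopfAlgebra.antipode (R := k) x) = x)
    (hS'r : ∀ x : H, HopfAlgebra.antipode (R := k) (S' x) = x)
    (lam : H →ₗ[k] k)
    (hlaml : ∀ h : H, swr lam h = lam h • (1 : H))
    (hinjl : Function.Injective (fun h : H => lam ∘ₗ LinearMap.mulLeft k h))
    (hinjr : Function.Injective (fun h : H => (lam ∘ₗ S') ∘ₗ LinearMap.mulRight k h))
    (χ Ω : H → H)
    (hχ : ∀ x h : H, lam (x * h) = lam (χ h * x))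
    (hΩ : ∀ x h : H, (lam ∘ₗ S') (h * x) = (lam ∘ₗ S') (x * Ω h)) :
    (∀ h : H, Ω h = S' (χ (HopfAlgebra.antipode (R := k) h))) ∧
    (∀ h : H, Ω h = HopfAlgebra.antipode (R := k) (χ (S' h))) ∧
    (∀ h : H, Coalgebra.counit (R := k) (Ω h) =
      Coalgebra.counit (R := k) (χ (HopfAlgebra.antipode (R := k) h))) := by
  have S'_mul (a b : H) : S' (a * b) = S' b * S' a := by
    conv_lhs => rw [← hS'r a, ← hS'r b, ← antipode_mul_antidistrib, hS'l]
  have hΩχ (h : H) : Ω h = antipode k (χ (S' h)) :=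
    hinjr <| LinearMap.ext fun x ↦ by
      change (lam ∘ₗ S') (x * Ω h) = (lam ∘ₗ S') (x * _)
      rw [← hΩ, LinearMap.comp_apply, LinearMap.comp_apply, S'_mul, S'_mul, hS'l, hχ]
  refine ⟨fun h ↦ ?_, hΩχ, fun h ↦ ?_⟩
  · have := nakayama_antipode_antipode hinjl hχ hlaml (Function.LeftInverse.injective hS'l) (S' h)
    simp only [nakayamaAlgHom_apply, hS'r] at this
    rw [hΩχ, this, hS'l]
  · have := algHom_antipode_antipode
      ((Bialgebra.counitAlgHom k H).comp (nakayamaAlgHom hinjl hχ)) (S' h)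
    simp only [AlgHom.comp_apply, nakayamaAlgHom_apply, hS'r] at this
    rw [hΩχ, counit_antipode]
    exact this.symm

/-- `H` Hopf algebra over `k` with bijective antipode `S` (linear inverse
`S'`), `λ ≠ 0` a left integral for `H` in `H⁎`, and `Λ := λ ∘ S⁻¹`.  Assume `h ↦ λ ↼ h`
and `h ↦ h ⇀ Λ` are injective.  If `χ` satisfies `λ(x·h) = λ(χ(h)·x)` and `Ω` satisfies
`Λ(h·x) = Λ(x·Ω(h))`, then `Ω = S⁻¹ ∘ χ ∘ S = S ∘ χ ∘ S⁻¹` and `ε ∘ Ω = (ε ∘ χ) ∘ S`. -/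
theorem statement9
    (S' : H →ₗ[k] H)
    (hS'l : ∀ x : H, S' (HopfAlgebra.antipode (R := k) x) = x)
    (hS'r : ∀ x : H, HopfAlgebra.antipode (R := k) (S' x) = x)
    (lam : H →ₗ[k] k) (hlam0 : lam ≠ 0)
    (hlaml : ∀ h : H, swr lam h = lam h • (1 : H))
    (hinjl : Function.Injective (fun h : H => lam ∘ₗ LinearMap.mulLeft k h))
    (hinjr : Function.Injective (fun h : H => (lam ∘ₗ S') ∘ₗ LinearMap.mulRight k h))
    (χ Ω : H → H)
    (hχ : ∀ x h : H, lam (x * h) = lam (χ h * x))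
    (hΩ : ∀ x h : H, (lam ∘ₗ S') (h * x) = (lam ∘ₗ S') (x * Ω h)) :
    (∀ h : H, Ω h = S' (χ (HopfAlgebra.antipode (R := k) h))) ∧
    (∀ h : H, Ω h = HopfAlgebra.antipode (R := k) (χ (S' h))) ∧
    (∀ h : H, Coalgebra.counit (R := k) (Ω h) =
      Coalgebra.counit (R := k) (χ (HopfAlgebra.antipode (R := k) h))) :=
  statement9_general S' hS'l hS'r lam hlaml hinjl hinjr χ Ω hχ hΩ
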